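/- arXiv:math/0511460 — 7 statements merged into one kernel-verified Lean document; each statement's English description precedes it below -/
import Mathlib

section
/- Let s_1,...,s_n be nonnegative real numbers and C > 0. Suppose that for every vector μ = (μ_1,...,μ_n) of nonnegative integers with Σμ_i = N, the multinomial coefficient binom(N; μ) times Π s_i^{μ_i} is at most C^N. Then Σ_{i=1}^n s_i ≤ C. -/
/-!
Expanding `(∑ i, s i) ^ N` by the multinomial theorem gives at most `(N + 1) ^ n` terms, each
bounded by `C ^ N`; so `r = (∑ i, s i) / C` satisfies `r ^ N ≤ (N + 1) ^ n` for every `N ≥ 1`.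
A polynomial cannot dominate an exponential with base `> 1`, hence `r ≤ 1`.
-/

open Finset Filter Topology

theorem Finset.sum_pow_le_card_piAntidiag_nsmul {ι R : Type*} [DecidableEq ι] [CommSemiring R]
    [PartialOrder R] [IsOrderedRing R] (s : Finset ι) (f : ι → R) (N : ℕ) (c : R)
    (h : ∀ μ ∈ piAntidiag s N, (Nat.multinomial s μ : R) * ∏ i ∈ s, f i ^ μ i ≤ c) :
    (∑ i ∈ s, f i) ^ N ≤ #(piAntidiag s N) • c := by
  rw [sum_pow_eq_sum_piAntidiag]
  exact sum_le_card_nsmul _ _ _ h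

theorem Finset.card_piAntidiag_univ_le {ι : Type*} [Fintype ι] [DecidableEq ι] (N : ℕ) :
    #(piAntidiag (univ : Finset ι) N) ≤ (N + 1) ^ Fintype.card ι := by
  have hsub : piAntidiag (univ : Finset ι) N ⊆ Fintype.piFinset fun _ ↦ range (N + 1) := by
    intro μ hμ
    rw [mem_piAntidiag] at hμ
    simp only [Fintype.mem_piFinset, mem_range, Nat.lt_succ_iff, ← hμ.1]
    exact fun i ↦ single_le_sum (fun j _ ↦ Nat.zero_le (μ j)) (mem_univ i)
  simpa using card_le_card hsub

theorem le_one_of_eventually_pow_le_succ_pow {r : ℝ} (k : ℕ)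
    (h : ∀ᶠ N : ℕ in atTop, r ^ N ≤ ((N : ℝ) + 1) ^ k) : r ≤ 1 := by
  by_contra! hr
  have hr0 : 0 < r := one_pos.trans hr
  have hlim : Tendsto (fun N : ℕ ↦ ((N + 1 : ℕ) : ℝ) ^ k / r ^ (N + 1)) atTop (𝓝 0) :=
    (tendsto_pow_const_div_const_pow_of_one_lt k hr).comp (tendsto_add_atTop_nat 1)
  have hbound : ∀ᶠ N : ℕ in atTop, r⁻¹ ≤ ((N + 1 : ℕ) : ℝ) ^ k / r ^ (N + 1) := by
    filter_upwards [h] with N hN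
    rw [le_div_iff₀ (by positivity), pow_succ', inv_mul_cancel_left₀ hr0.ne']
    exact_mod_cast hN
  exact (inv_pos.2 hr0).not_ge (ge_of_tendsto hlim hbound)

theorem stmt_0_general (n : ℕ) (s : Fin n → ℝ) (C : ℝ)
    (hC : 0 < C)
    (h : ∀ N : ℕ, 1 ≤ N → ∀ μ : Fin n → ℕ, (∑ i, μ i) = N →
      (Nat.multinomial Finset.univ μ : ℝ) * ∏ i, s i ^ μ i ≤ C ^ N) :
    ∑ i, s i ≤ C := by
  have hpow : ∀ N : ℕ, 1 ≤ N → ((∑ i, s i) / C) ^ N ≤ ((N : ℝ) + 1) ^ n := by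
    intro N hN
    have hexp := sum_pow_le_card_piAntidiag_nsmul univ s N (C ^ N)
      fun μ hμ ↦ h N hN μ (mem_piAntidiag.1 hμ).1
    have hcard : (#(piAntidiag (univ : Finset (Fin n)) N) : ℝ) ≤ ((N : ℝ) + 1) ^ n := by
      exact_mod_cast (card_piAntidiag_univ_le (ι := Fin n) N).trans_eq (by simp)
    rw [nsmul_eq_mul] at hexp
    rw [div_pow, div_le_iff₀ (pow_pos hC N)]
    exact hexp.trans (mul_le_mul_of_nonneg_right hcard (pow_pos hC N).le)
  exact (div_le_one hC).1 <|
    le_one_of_eventually_pow_le_succ_pow n (eventually_atTop.2 ⟨1, hpow⟩)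

theorem stmt_0 (n : ℕ) (s : Fin n → ℝ) (C : ℝ)
    (hs : ∀ i, 0 ≤ s i) (hC : 0 < C)
    (h : ∀ N : ℕ, 1 ≤ N → ∀ μ : Fin n → ℕ, (∑ i, μ i) = N →
      (Nat.multinomial Finset.univ μ : ℝ) * ∏ i, s i ^ μ i ≤ C ^ N) :
    ∑ i, s i ≤ C :=
  stmt_0_general n s C hC h
end

section
/- Let G be a group and S_1, S_2, S_3 ⊆ G subsets satisfying the triple product property. Then for any permutation σ of {1,2,3}, the subsets S_{σ(1)}, S_{σ(2)}, S_{σ(3)} also satisfy the triple product property. -/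
def rightQuotientSet {G : Type*} [Group G] (S : Set G) : Set G :=
  {q | ∃ s₁ ∈ S, ∃ s₂ ∈ S, q = s₁ * s₂⁻¹}

def TripleProductProperty {G : Type*} [Group G] (S₁ S₂ S₃ : Set G) : Prop :=
  ∀ q₁ ∈ rightQuotientSet S₁, ∀ q₂ ∈ rightQuotientSet S₂, ∀ q₃ ∈ rightQuotientSet S₃,
    q₁ * q₂ * q₃ = 1 → q₁ = 1 ∧ q₂ = 1 ∧ q₃ = 1

lemma inv_mem_rqs {G : Type*} [Group G] {S : Set G} {q : G}
    (hq : q ∈ rightQuotientSet S) : q⁻¹ ∈ rightQuotientSet S := by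
  obtain ⟨a, ha, b, hb, rfl⟩ := hq
  exact ⟨b, hb, a, ha, by group⟩

lemma tpp_cyc {G : Type*} [Group G] {S₁ S₂ S₃ : Set G}
    (h : TripleProductProperty S₁ S₂ S₃) : TripleProductProperty S₂ S₃ S₁ := by
  intro q₂ h₂ q₃ h₃ q₁ h₁ he
  have : q₁ * q₂ * q₃ = 1 := by
    have hq : q₁ = (q₂ * q₃)⁻¹ := eq_inv_of_mul_eq_one_right he
    subst hq; group
  obtain ⟨e1, e2, e3⟩ := h q₁ h₁ q₂ h₂ q₃ h₃ this
  exact ⟨e2, e3, e1⟩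

lemma tpp_rev {G : Type*} [Group G] {S₁ S₂ S₃ : Set G}
    (h : TripleProductProperty S₁ S₂ S₃) : TripleProductProperty S₃ S₂ S₁ := by
  intro q₃ h₃ q₂ h₂ q₁ h₁ he
  have he' : q₁⁻¹ * q₂⁻¹ * q₃⁻¹ = 1 := by
    rw [← mul_inv_rev, ← mul_inv_rev, inv_eq_one, ← mul_assoc]; exact he
  obtain ⟨e1, e2, e3⟩ := h _ (inv_mem_rqs h₁) _ (inv_mem_rqs h₂) _ (inv_mem_rqs h₃) he'
  exact ⟨inv_eq_one.mp e3, inv_eq_one.mp e2, inv_eq_one.mp e1⟩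

theorem stmt_1 {G : Type*} [Group G] (S : Fin 3 → Set G)
    (h : TripleProductProperty (S 0) (S 1) (S 2)) (σ : Equiv.Perm (Fin 3)) :
    TripleProductProperty (S (σ 0)) (S (σ 1)) (S (σ 2)) := by
  have key : ∀ x : Fin 3, x = 0 ∨ x = 1 ∨ x = 2 := by decide
  have i01 : σ 0 ≠ σ 1 := fun e => by simpa using σ.injective e
  have i02 : σ 0 ≠ σ 2 := fun e => by simpa using σ.injective e
  have i12 : σ 1 ≠ σ 2 := fun e => by simpa using σ.injective e
  rcases key (σ 0) with h0 | h0 | h0 <;> rcases key (σ 1) with h1 | h1 | h1 <;>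
    rcases key (σ 2) with h2 | h2 | h2 <;>
    first
      | (exact absurd (h0.trans h1.symm) i01)
      | (exact absurd (h0.trans h2.symm) i02)
      | (exact absurd (h1.trans h2.symm) i12)
      | (rw [h0, h1, h2];
         first
           | exact h
           | exact tpp_cyc h
           | exact tpp_cyc (tpp_cyc h)
           | exact tpp_rev h
           | exact tpp_rev (tpp_cyc h)
           | exact tpp_rev (tpp_cyc (tpp_cyc h)))
end

section
/- If S_1, S_2, S_3 ⊆ G and S_1', S_2', S_3' ⊆ G' each satisfy the triple product property (in G and G' respectively), then the subsets S_1 × S_1', S_2 × S_2', S_3 × S_3' of G × G' satisfy the triple product property. -/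
lemma rqs_proj {G G' : Type*} [Group G] [Group G'] {S : Set G} {S' : Set G'}
    {q : G × G'} (hq : q ∈ rightQuotientSet (S ×ˢ S')) :
    q.1 ∈ rightQuotientSet S ∧ q.2 ∈ rightQuotientSet S' := by
  obtain ⟨s, hs, t, ht, rfl⟩ := hq
  exact ⟨⟨s.1, hs.1, t.1, ht.1, rfl⟩, ⟨s.2, hs.2, t.2, ht.2, rfl⟩⟩

theorem stmt_2 {G G' : Type*} [Group G] [Group G']
    (S₁ S₂ S₃ : Set G) (S₁' S₂' S₃' : Set G')
    (h : TripleProductProperty S₁ S₂ S₃) (h' : TripleProductProperty S₁' S₂' S₃') :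
    TripleProductProperty (S₁ ×ˢ S₁') (S₂ ×ˢ S₂') (S₃ ×ˢ S₃') := by
  intro q₁ hq₁ q₂ hq₂ q₃ hq₃ heq
  have h1 := rqs_proj hq₁
  have h2 := rqs_proj hq₂
  have h3 := rqs_proj hq₃
  have e1 : q₁.1 * q₂.1 * q₃.1 = 1 := congrArg Prod.fst heq
  have e2 : q₁.2 * q₂.2 * q₃.2 = 1 := congrArg Prod.snd heq
  obtain ⟨a1, a2, a3⟩ := h _ h1.1 _ h2.1 _ h3.1 e1
  obtain ⟨b1, b2, b3⟩ := h' _ h1.2 _ h2.2 _ h3.2 e2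
  exact ⟨Prod.ext a1 b1, Prod.ext a2 b2, Prod.ext a3 b3⟩
end

section
/- Let Δ_n = {(a,b,c) ∈ ℤ³ : a+b+c = n−1, a,b,c ≥ 0}, and for i = 1,2,3 let H_i be the subgroup of Sym(Δ_n) consisting of permutations π such that (π(x))_i = x_i for all x ∈ Δ_n. Then H_1, H_2, H_3 satisfy the triple product property in Sym(Δ_n). -/
def Delta (n : ℕ) : Type :=
  {x : Fin 3 → ℤ // (∑ i, x i) = (n : ℤ) - 1 ∧ ∀ i, 0 ≤ x i}

/-- The subgroup of permutations of `Δ_n` preserving the `i`-th coordinate. -/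
def coordSubgroup (n : ℕ) (i : Fin 3) : Set (Equiv.Perm (Delta n)) :=
  {π | ∀ x : Delta n, (π x).val i = x.val i}

/-!
Coordinates are indexed `0, 1, 2`. Since `h₂ * h₃ = h₁⁻¹` preserves coordinate `0`, one shows by
downward induction on `c` that `h₂` fixes every point `x` with `x 2 ≥ c`. If `h₂` fixes all points
with `x 2 > c` and `z 2 = c`, then `w = h₂ (h₃ z)` cannot have `w 2 > c`; as `w 0 = z 0` and
`w 1 = (h₃ z) 1`, this forces `z 1 ≤ (h₃ z) 1`. A permutation of the finite level `{x | x 2 = c}`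
that never decreases `x 1` preserves it, so `h₃` fixes the level pointwise, and then `h₂ = h₁⁻¹`
preserves two coordinates of each point there, hence the point.
-/

theorem Equiv.Perm.apply_eq_of_le_apply_on {α M : Type*} [Finite α] [AddCommMonoid M]
    [PartialOrder M] [IsOrderedCancelAddMonoid M] (σ : Equiv.Perm α) {p : α → Prop}
    (hp : ∀ x, p (σ x) ↔ p x) {f : α → M} (hf : ∀ x, p x → f x ≤ f (σ x)) {x : α}
    (hx : p x) : f (σ x) = f x := by
  classical
  have := Fintype.ofFinite α
  let g : α → M := fun y => if p y then f y else 0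
  have hg : ∀ y, g y ≤ g (σ y) := fun y => by
    by_cases hy : p y
    · simpa [g, hy, hp] using hf y hy
    · simp [g, hy, hp]
  have hsum : ∑ y, g y = ∑ y, g (σ y) := (Equiv.sum_comp σ g).symm
  have := (Finset.sum_eq_sum_iff_of_le fun y _ => hg y).1 hsum x (Finset.mem_univ x)
  simpa [g, hx, hp] using this.symm

theorem coordSubgroup.inv_mem {n : ℕ} {π : Equiv.Perm (Delta n)} {i : Fin 3}
    (hπ : π ∈ coordSubgroup n i) : π⁻¹ ∈ coordSubgroup n i := fun x => by
  simpa using (hπ (π⁻¹ x)).symm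

namespace Delta

variable {n : ℕ}

theorem coord_sum (x : Delta n) : x.1 0 + x.1 1 + x.1 2 = (n : ℤ) - 1 := by
  simpa [Fin.sum_univ_three] using x.2.1

theorem coord_le (x : Delta n) (i : Fin 3) : x.1 i ≤ (n : ℤ) - 1 :=
  (Finset.single_le_sum (fun j _ => x.2.2 j) (Finset.mem_univ i)).trans_eq x.2.1

instance : Finite (Delta n) :=
  Set.Finite.to_subtype (s := {x : Fin 3 → ℤ | (∑ i, x i) = (n : ℤ) - 1 ∧ ∀ i, 0 ≤ x i}) <|
    (Set.Finite.pi' fun _ => Set.finite_Icc (0 : ℤ) (n - 1)).subset fun x hx i =>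
      ⟨hx.2 i, coord_le ⟨x, hx⟩ i⟩

theorem ext_of_coord_eq {i j : Fin 3} (hij : i ≠ j) {x y : Delta n} (hi : x.1 i = y.1 i)
    (hj : x.1 j = y.1 j) : x = y := by
  have hx := coord_sum x
  have hy := coord_sum y
  apply Subtype.ext
  funext k
  fin_cases i <;> fin_cases j <;> fin_cases k <;> simp_all <;> linarith

variable {σ τ : Equiv.Perm (Delta n)}

theorem coord_one_le_apply_of_fixed_above (hσ : σ ∈ coordSubgroup n 1)
    (hτ : τ ∈ coordSubgroup n 2) (hστ : σ * τ ∈ coordSubgroup n 0) {c : ℤ}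
    (habove : ∀ x : Delta n, c < x.1 2 → σ x = x) {z : Delta n} (hz : z.1 2 = c) :
    z.1 1 ≤ (τ z).1 1 := by
  have hw₀ : (σ (τ z)).1 0 = z.1 0 := hστ z
  have hw₁ : (σ (τ z)).1 1 = (τ z).1 1 := hσ (τ z)
  have hw₂ : (σ (τ z)).1 2 ≤ c := by
    by_contra! hlt
    have hfix : σ (τ z) = τ z := σ.injective (habove _ hlt)
    have := hτ z
    rw [← hfix] at this
    omega
  linarith [coord_sum z, coord_sum (σ (τ z))]

theorem apply_eq_self_of_fixed_above (hσ : σ ∈ coordSubgroup n 1)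
    (hτ : τ ∈ coordSubgroup n 2) (hστ : σ * τ ∈ coordSubgroup n 0) {c : ℤ}
    (habove : ∀ x : Delta n, c < x.1 2 → σ x = x) {x : Delta n} (hx : x.1 2 = c) :
    τ x = x := by
  have hτ₁ : (τ x).1 1 = x.1 1 :=
    τ.apply_eq_of_le_apply_on (p := fun y => y.1 2 = c) (fun y => by rw [hτ y])
      (fun _ => coord_one_le_apply_of_fixed_above hσ hτ hστ habove) hx
  exact ext_of_coord_eq (by decide) hτ₁ (hτ x)

theorem eq_one_of_mul_mem (hσ : σ ∈ coordSubgroup n 1) (hτ : τ ∈ coordSubgroup n 2)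
    (hστ : σ * τ ∈ coordSubgroup n 0) : σ = 1 ∧ τ = 1 := by
  have hσ_fix : ∀ x, τ x = x → σ x = x := fun x hx =>
    ext_of_coord_eq (i := 0) (j := 1) (by decide) (by simpa [hx] using hστ x) (hσ x)
  have hσ_above : ∀ c ≤ (n : ℤ), ∀ x : Delta n, c ≤ x.1 2 → σ x = x := by
    intro c hc
    induction c, hc using Int.leInductionDown with
    | base => intro x hx; linarith [coord_le x 2]
    | pred c _ ih =>
      intro x hx
      rcases hx.lt_or_eq with hlt | heq
      · exact ih x (by omega)
      · exact hσ_fix x <| apply_eq_self_of_fixed_above hσ hτ hστ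
          (fun y hy => ih y (by omega)) heq.symm
  have hσ_one : σ = 1 := Equiv.ext fun x => hσ_above _ (by linarith [coord_le x 2]) x le_rfl
  refine ⟨hσ_one, Equiv.ext fun x => ?_⟩
  exact apply_eq_self_of_fixed_above hσ hτ hστ (fun y _ => by simp [hσ_one]) rfl

end Delta

theorem stmt_3 (n : ℕ)
    (h₁ : Equiv.Perm (Delta n)) (h₂ : Equiv.Perm (Delta n)) (h₃ : Equiv.Perm (Delta n))
    (hh₁ : h₁ ∈ coordSubgroup n 0) (hh₂ : h₂ ∈ coordSubgroup n 1)
    (hh₃ : h₃ ∈ coordSubgroup n 2) (h : h₁ * h₂ * h₃ = 1) :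
    h₁ = 1 ∧ h₂ = 1 ∧ h₃ = 1 := by
  have h₂₃ : h₂ * h₃ = h₁⁻¹ := eq_inv_of_mul_eq_one_right (by rwa [← mul_assoc])
  obtain ⟨rfl, rfl⟩ := Delta.eq_one_of_mul_mem hh₂ hh₃ (h₂₃ ▸ coordSubgroup.inv_mem hh₁)
  simpa using h
end

section
/- Let n ≥ 1, H = (ℤ/nℤ)³ with the three coordinate subgroups H_1, H_2, H_3 (and set H_4 = H_1), and let G = H² ⋊ C_2 where the generator z of C_2 swaps the two factors of H. For i = 1,2,3 let S_i = {(a,b)z^j : a ∈ H_i \ {0}, b ∈ H_{i+1}, j ∈ {0,1}}. Then S_1, S_2, S_3 satisfy the triple product property in G. -/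
/-- `H² = (ℤ/n)³ × (ℤ/n)³`, written multiplicatively, indexed by `ℤ/2`. -/
abbrev Hsq (n : ℕ) : Type := ZMod 2 → (Fin 3 → Multiplicative (ZMod n))

/-- The automorphism of `H²` given by cyclically shifting the two factors by `j`
(for `j = 1`, this swaps the two factors). -/
def shiftAut (n : ℕ) (j : ZMod 2) : MulAut (Hsq n) where
  toFun h := fun i => h (i + j)
  invFun h := fun i => h (i - j)
  left_inv h := funext fun i => by simp
  right_inv h := funext fun i => by simp
  map_mul' h g := rfl

/-- The action of `C₂` on `H²` swapping the two factors. -/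
def swapAction (n : ℕ) : Multiplicative (ZMod 2) →* MulAut (Hsq n) where
  toFun j := shiftAut n j.toAdd
  map_one' := by ext h i; simp [shiftAut]
  map_mul' j k := by ext h i; simp [shiftAut, add_assoc]

/-- The group `G = H² ⋊ C₂`. -/
abbrev Gn (n : ℕ) : Type := SemidirectProduct (Hsq n) (Multiplicative (ZMod 2)) (swapAction n)

/-- `S_i` consists of the elements `(a,b)zʲ` with `a ∈ H_i \ {0}`, `b ∈ H_{i+1}`,
`j ∈ {0,1}` (here `H_i ⊆ (ℤ/n)³` is the `i`-th coordinate subgroup, and indices are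
taken mod 3 so that `H_4 = H_1`). -/
def Sset (n : ℕ) (i : Fin 3) : Set (Gn n) :=
  {g | (∀ j : Fin 3, j ≠ i → g.left 0 j = 1) ∧ g.left 0 ≠ 1 ∧
       (∀ j : Fin 3, j ≠ i + 1 → g.left 1 j = 1)}

/-!
Write `q = s s'⁻¹ ∈ Q(S_i)` as `(x, y) zʲ`. If `j = 0` then `x ∈ H_i` and `y ∈ H_{i+1}`;
if `j = 1` then `x, y ∈ H_i H_{i+1}` and both have nonzero `H_i`-coordinate, since they
carry the nonzero `a`-part of `s` resp. `s'`. The relation `q₁ q₂ q₃ = 1` is invariant under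
cyclic rotation, so up to rotation the `z`-exponents are either `(0, 0, 0)` or `(0, 1, 1)`.
In the second case the `H_{i+1}`-coordinate of the first factor of `q₁ q₂ q₃` is that of `q₂`
alone, which is nonzero. In the first case the three left parts lie in the complementary
coordinate subgroups, so all vanish.
-/

lemma Sset.left_zero_apply_ne_one {n : ℕ} {i : Fin 3} {s : Gn n} (hs : s ∈ Sset n i) :
    s.left 0 i ≠ 1 := by
  intro h
  refine hs.2.1 (funext fun j => ?_)
  by_cases hj : j = i
  · rw [hj, h]; rfl
  · exact hs.1 j hj

/-- The exponent `j` in `g = (a, b) zʲ`. -/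
def Gn.zExponent {n : ℕ} (g : Gn n) : ZMod 2 := Multiplicative.toAdd g.right

namespace Gn

variable {n : ℕ}

lemma mul_left_apply (g h : Gn n) (k : ZMod 2) :
    (g * h).left k = g.left k * h.left (k + g.zExponent) := rfl

lemma inv_left_apply (g : Gn n) (k : ZMod 2) :
    g⁻¹.left k = (g.left (k + g.zExponent))⁻¹ := by
  show (g.left (k + Multiplicative.toAdd g.right⁻¹))⁻¹ = _
  rw [toAdd_inv, ZMod.neg_eq_self_mod_two]; rfl

lemma zExponent_mul (g h : Gn n) : (g * h).zExponent = g.zExponent + h.zExponent := rfl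

lemma zExponent_inv (g : Gn n) : g⁻¹.zExponent = g.zExponent :=
  ZMod.neg_eq_self_mod_two _

lemma eq_one_of_left_eq_one_of_zExponent_eq_zero {g : Gn n} (hl : g.left = 1)
    (hz : g.zExponent = 0) : g = 1 :=
  SemidirectProduct.ext hl hz

variable {i : Fin 3} {q : Gn n}

lemma exists_left_eq_of_mem_rightQuotientSet (hq : q ∈ rightQuotientSet (Sset n i)) :
    ∃ s ∈ Sset n i, ∃ s' ∈ Sset n i,
      ∀ k, q.left k = s.left k * (s'.left (k + q.zExponent))⁻¹ := by
  obtain ⟨s, hs, s', hs', rfl⟩ := hq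
  refine ⟨s, hs, s', hs', fun k => ?_⟩
  rw [mul_left_apply, inv_left_apply, zExponent_mul, zExponent_inv, add_assoc]

lemma left_apply_eq_one_of_zExponent_eq_zero (hq : q ∈ rightQuotientSet (Sset n i))
    (hz : q.zExponent = 0) :
    (∀ j ≠ i, q.left 0 j = 1) ∧ (∀ j ≠ i + 1, q.left 1 j = 1) := by
  obtain ⟨s, hs, s', hs', hleft⟩ := exists_left_eq_of_mem_rightQuotientSet hq
  simp only [hleft, hz, add_zero]
  exact ⟨fun j hj => by simp [hs.1 j hj, hs'.1 j hj],
    fun j hj => by simp [hs.2.2 j hj, hs'.2.2 j hj]⟩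

lemma left_apply_of_zExponent_eq_one (hq : q ∈ rightQuotientSet (Sset n i))
    (hz : q.zExponent = 1) (k : ZMod 2) :
    (∀ j, j ≠ i → j ≠ i + 1 → q.left k j = 1) ∧ q.left k i ≠ 1 := by
  obtain ⟨s, hs, s', hs', hleft⟩ := exists_left_eq_of_mem_rightQuotientSet hq
  have hi : i ≠ i + 1 := by grind
  obtain rfl | rfl : k = 0 ∨ k = 1 := by decide +revert
  · simp only [hleft, hz, zero_add]
    refine ⟨fun j hj hj' => ?_, ?_⟩
    · simp [hs.1 j hj, hs'.2.2 j hj']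
    · simpa [hs'.2.2 i hi] using Sset.left_zero_apply_ne_one hs
  · simp only [hleft, hz, show (1 : ZMod 2) + 1 = 0 from rfl]
    refine ⟨fun j hj hj' => ?_, ?_⟩
    · simp [hs.2.2 j hj', hs'.1 j hj]
    · simpa [hs.2.2 i hi] using Sset.left_zero_apply_ne_one hs'

end Gn

structure IsQuotientTriple (n : ℕ) (i : Fin 3) (q₁ q₂ q₃ : Gn n) : Prop where
  mem₁ : q₁ ∈ rightQuotientSet (Sset n i)
  mem₂ : q₂ ∈ rightQuotientSet (Sset n (i + 1))
  mem₃ : q₃ ∈ rightQuotientSet (Sset n (i + 2))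
  mul_mul_eq_one : q₁ * q₂ * q₃ = 1

namespace IsQuotientTriple

open Gn

variable {n : ℕ} {i : Fin 3} {q₁ q₂ q₃ : Gn n} (h : IsQuotientTriple n i q₁ q₂ q₃)
include h

lemma rotate : IsQuotientTriple n (i + 1) q₂ q₃ q₁ where
  mem₁ := h.mem₂
  mem₂ := by rw [show i + 1 + 1 = i + 2 by grind]; exact h.mem₃
  mem₃ := by rw [show i + 1 + 2 = i by grind]; exact h.mem₁
  mul_mul_eq_one := mul_eq_one_comm.mp (by rw [← mul_assoc]; exact h.mul_mul_eq_one)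

lemma left_apply_mul_mul (k : ZMod 2) (j : Fin 3) :
    q₁.left k j * q₂.left (k + q₁.zExponent) j *
      q₃.left (k + q₁.zExponent + q₂.zExponent) j = 1 := by
  have := congrFun (congrArg (fun q : Gn n => q.left k) h.mul_mul_eq_one) j
  rwa [mul_left_apply, mul_left_apply, zExponent_mul, ← add_assoc] at this

lemma zExponent_add_add : q₁.zExponent + q₂.zExponent + q₃.zExponent = 0 := by
  rw [← zExponent_mul, ← zExponent_mul, h.mul_mul_eq_one]; rfl

lemma not_zExponent_eq_zero_one_one :
    ¬(q₁.zExponent = 0 ∧ q₂.zExponent = 1 ∧ q₃.zExponent = 1) := by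
  rintro ⟨hz₁, hz₂, hz₃⟩
  have := h.left_apply_mul_mul 0 (i + 1)
  rw [hz₁, hz₂, add_zero, zero_add,
    (left_apply_eq_one_of_zExponent_eq_zero h.mem₁ hz₁).1 (i + 1) (by grind),
    (left_apply_of_zExponent_eq_one h.mem₃ hz₃ 1).1 (i + 1) (by grind) (by grind),
    one_mul, mul_one] at this
  exact (left_apply_of_zExponent_eq_one h.mem₂ hz₂ 0).2 this

/-- The `z`-exponents add up to `0` in `ZMod 2`, so a nonzero pattern has exactly two
entries `1` and is a rotation of `(0, 1, 1)`. -/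
lemma zExponent_eq_zero : q₁.zExponent = 0 := by
  have key : ∀ a b c : ZMod 2, a + b + c = 0 → ¬(a = 0 ∧ b = 1 ∧ c = 1) →
      ¬(b = 0 ∧ c = 1 ∧ a = 1) → ¬(c = 0 ∧ a = 1 ∧ b = 1) → a = 0 := by decide
  exact key _ _ _ h.zExponent_add_add h.not_zExponent_eq_zero_one_one
    h.rotate.not_zExponent_eq_zero_one_one h.rotate.rotate.not_zExponent_eq_zero_one_one

lemma left_eq_one : q₁.left = 1 := by
  have hz₁ := h.zExponent_eq_zero
  have hz₂ := h.rotate.zExponent_eq_zero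
  have hz₃ := h.rotate.rotate.zExponent_eq_zero
  obtain ⟨h₁₀, h₁₁⟩ := left_apply_eq_one_of_zExponent_eq_zero h.mem₁ hz₁
  obtain ⟨h₂₀, h₂₁⟩ := left_apply_eq_one_of_zExponent_eq_zero h.mem₂ hz₂
  obtain ⟨h₃₀, h₃₁⟩ := left_apply_eq_one_of_zExponent_eq_zero h.mem₃ hz₃
  funext k j
  obtain rfl | rfl : k = 0 ∨ k = 1 := by decide +revert
  · by_cases hj : j = i
    · subst hj
      simpa [hz₁, hz₂, h₂₀ j (by grind), h₃₀ j (by grind)] using h.left_apply_mul_mul 0 j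
    · exact h₁₀ j hj
  · by_cases hj : j = i + 1
    · subst hj
      simpa [hz₁, hz₂, h₂₁ (i + 1) (by grind), h₃₁ (i + 1) (by grind)]
        using h.left_apply_mul_mul 1 (i + 1)
    · exact h₁₁ j hj

lemma eq_one : q₁ = 1 :=
  eq_one_of_left_eq_one_of_zExponent_eq_zero h.left_eq_one h.zExponent_eq_zero

end IsQuotientTriple

theorem stmt_4_general (n : ℕ) :
    TripleProductProperty (Sset n 0) (Sset n 1) (Sset n 2) := by
  intro q₁ hq₁ q₂ hq₂ q₃ hq₃ hq
  have h : IsQuotientTriple n 0 q₁ q₂ q₃ := ⟨hq₁, hq₂, hq₃, hq⟩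
  exact ⟨h.eq_one, h.rotate.eq_one, h.rotate.rotate.eq_one⟩

theorem stmt_4 (n : ℕ) (hn : 1 ≤ n) :
    TripleProductProperty (Sset n 0) (Sset n 1) (Sset n 2) :=
  stmt_4_general n
end

section
/- If n pairs of subsets A_i, B_i ⊆ H satisfy the simultaneous double product property and n' pairs A_j', B_j' ⊆ H' satisfy the simultaneous double product property, then the nn' pairs A_i × A_j', B_i × B_j' ⊆ H × H' satisfy the simultaneous double product property. -/
/-- Two subsets satisfy the double product property. -/
def DoubleProductProperty {G : Type*} [Group G] (S₁ S₂ : Set G) : Prop :=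
  ∀ q₁ ∈ rightQuotientSet S₁, ∀ q₂ ∈ rightQuotientSet S₂,
    q₁ * q₂ = 1 → q₁ = 1 ∧ q₂ = 1

/-- A family of pairs of subsets satisfies the simultaneous double product property. -/
def SimultaneousDPP {G : Type*} [Group G] {ι : Type*} (A B : ι → Set G) : Prop :=
  (∀ i, DoubleProductProperty (A i) (B i)) ∧
  ∀ i j k : ι, ∀ a ∈ A i, ∀ a' ∈ A j, ∀ b ∈ B j, ∀ b' ∈ B k,
    a * a'⁻¹ * b * b'⁻¹ = 1 → i = k

theorem stmt_11 {H H' : Type*} [Group H] [Group H'] {ι ι' : Type*}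
    (A B : ι → Set H) (A' B' : ι' → Set H')
    (h : SimultaneousDPP A B) (h' : SimultaneousDPP A' B') :
    SimultaneousDPP (fun p : ι × ι' => A p.1 ×ˢ A' p.2)
      (fun p : ι × ι' => B p.1 ×ˢ B' p.2) := by
  obtain ⟨h1, h2⟩ := h
  obtain ⟨h1', h2'⟩ := h'
  constructor
  · rintro ⟨i, i'⟩ q1 ⟨s1, ⟨hs1a, hs1b⟩, s2, ⟨hs2a, hs2b⟩, rfl⟩ q2
      ⟨t1, ⟨ht1a, ht1b⟩, t2, ⟨ht2a, ht2b⟩, rfl⟩ hq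
    rw [Prod.ext_iff] at hq
    simp only [Prod.fst_mul, Prod.snd_mul, Prod.fst_inv, Prod.snd_inv, Prod.fst_one,
      Prod.snd_one] at hq
    obtain ⟨e1, e2⟩ := h1 i _ ⟨s1.1, hs1a, s2.1, hs2a, rfl⟩ _ ⟨t1.1, ht1a, t2.1, ht2a, rfl⟩ hq.1
    obtain ⟨f1, f2⟩ := h1' i' _ ⟨s1.2, hs1b, s2.2, hs2b, rfl⟩ _ ⟨t1.2, ht1b, t2.2, ht2b, rfl⟩ hq.2
    exact ⟨Prod.ext e1 f1, Prod.ext e2 f2⟩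
  · rintro ⟨i, i'⟩ ⟨j, j'⟩ ⟨k, k'⟩ a ⟨ha1, ha2⟩ a' ⟨ha'1, ha'2⟩ b ⟨hb1, hb2⟩ b' ⟨hb'1, hb'2⟩ hq
    rw [Prod.ext_iff] at hq
    simp only [Prod.fst_mul, Prod.snd_mul, Prod.fst_inv, Prod.snd_inv, Prod.fst_one,
      Prod.snd_one] at hq
    exact Prod.ext (h2 i j k _ ha1 _ ha'1 _ hb1 _ hb'1 hq.1)
      (h2' i' j' k' _ ha2 _ ha'2 _ hb2 _ hb'2 hq.2)
end

section
/- In H = (ℤ/nℤ)³ with coordinate subgroups H_1, H_2, H_3, the two triples A_1 = H_1 \ {0}, B_1 = H_2 \ {0}, C_1 = H_3 \ {0} and A_2 = H_2 \ {0}, B_2 = H_3 \ {0}, C_2 = H_1 \ {0} satisfy the simultaneous triple product property (for n ≥ 2). -/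
/-- The simultaneous triple product property for a family of triples of subsets of
an additive abelian group. -/
def SimultaneousTPP {H : Type*} [AddCommGroup H] {ι : Type*} (A B C : ι → Set H) : Prop :=
  (∀ i, ∀ a ∈ A i, ∀ a' ∈ A i, ∀ b ∈ B i, ∀ b' ∈ B i, ∀ c ∈ C i, ∀ c' ∈ C i,
    a - a' + (b - b') + (c - c') = 0 → a = a' ∧ b = b' ∧ c = c') ∧
  ∀ i j k : ι, ∀ a ∈ A i, ∀ a' ∈ A j, ∀ b ∈ B j, ∀ b' ∈ B k, ∀ c ∈ C k, ∀ c' ∈ C i,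
    a - a' + b - b' + c - c' = 0 → i = j ∧ j = k

/-- The `s`-th coordinate subgroup of `(ℤ/n)³` with `0` removed. -/
def Hpunct (n : ℕ) (s : Fin 3) : Set (Fin 3 → ZMod n) :=
  {x | (∀ j, j ≠ s → x j = 0) ∧ x ≠ 0}

lemma Hpunct_ne {n : ℕ} {s : Fin 3} {x : Fin 3 → ZMod n} (hx : x ∈ Hpunct n s) :
    x s ≠ 0 := by
  intro h
  exact hx.2 (funext fun j => by
    by_cases hj : j = s
    · subst hj; exact h
    · exact hx.1 j hj)

lemma Hpunct_eq {n : ℕ} {s : Fin 3} {x y : Fin 3 → ZMod n} (hx : x ∈ Hpunct n s)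
    (hy : y ∈ Hpunct n s) (h : x s = y s) : x = y := by
  funext j
  by_cases hj : j = s
  · subst hj; exact h
  · rw [hx.1 j hj, hy.1 j hj]

lemma tpp_row {n : ℕ} {s t u : Fin 3} (hst : s ≠ t) (hsu : s ≠ u) (htu : t ≠ u)
    {a a' b b' c c' : Fin 3 → ZMod n}
    (ha : a ∈ Hpunct n s) (ha' : a' ∈ Hpunct n s) (hb : b ∈ Hpunct n t)
    (hb' : b' ∈ Hpunct n t) (hc : c ∈ Hpunct n u) (hc' : c' ∈ Hpunct n u)
    (h : a - a' + (b - b') + (c - c') = 0) : a = a' ∧ b = b' ∧ c = c' := by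
  refine ⟨Hpunct_eq ha ha' ?_, Hpunct_eq hb hb' ?_, Hpunct_eq hc hc' ?_⟩
  · have e := congrFun h s
    simp only [Pi.add_apply, Pi.sub_apply, Pi.zero_apply,
      hb.1 s hst, hb'.1 s hst, hc.1 s hsu, hc'.1 s hsu]
      at e
    linear_combination e
  · have e := congrFun h t
    simp only [Pi.add_apply, Pi.sub_apply, Pi.zero_apply,
      ha.1 t (Ne.symm hst), ha'.1 t (Ne.symm hst), hc.1 t htu, hc'.1 t htu] at e
    linear_combination e
  · have e := congrFun h u
    simp only [Pi.add_apply, Pi.sub_apply, Pi.zero_apply,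
      ha.1 u (Ne.symm hsu), ha'.1 u (Ne.symm hsu), hb.1 u (Ne.symm htu), hb'.1 u (Ne.symm htu)] at e
    linear_combination e

theorem stmt_15 (n : ℕ) (hn : 2 ≤ n) :
    SimultaneousTPP (H := Fin 3 → ZMod n)
      ![Hpunct n 0, Hpunct n 1] ![Hpunct n 1, Hpunct n 2] ![Hpunct n 2, Hpunct n 0] := by
  constructor
  · intro i a ha a' ha' b hb b' hb' c hc c' hc' h
    fin_cases i <;> simp only [Matrix.cons_val_zero, Matrix.cons_val_one, Matrix.head_cons]
        at ha ha' hb hb' hc hc'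
    · exact tpp_row (by decide) (by decide) (by decide) ha ha' hb hb' hc hc' h
    · exact tpp_row (by decide) (by decide) (by decide) ha ha' hb hb' hc hc' h
  · intro i j k a ha a' ha' b hb b' hb' c hc c' hc' h
    fin_cases i <;> fin_cases j <;> fin_cases k <;>
      simp only [Matrix.cons_val_zero, Matrix.cons_val_one, Matrix.head_cons]
        at ha ha' hb hb' hc hc' <;>
      [skip; skip; skip; skip; skip; skip; skip; skip]
    -- (0,0,0)
    · exact ⟨rfl, rfl⟩
    -- (0,0,1): b ∈ H1 nonzero at 1, others zero at 1
    · exfalso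
      have e := congrFun h 1
      simp only [Pi.add_apply, Pi.sub_apply, Pi.zero_apply,
        ha.1 1 (by decide), ha'.1 1 (by decide), hb'.1 1 (by decide),
        hc.1 1 (by decide), hc'.1 1 (by decide)] at e
      exact Hpunct_ne hb (by linear_combination e)
    -- (0,1,0): a nonzero at 0
    · exfalso
      have e := congrFun h 0
      simp only [Pi.add_apply, Pi.sub_apply, Pi.zero_apply,
        ha'.1 0 (by decide), hb.1 0 (by decide), hb'.1 0 (by decide),
        hc.1 0 (by decide), hc'.1 0 (by decide)] at e
      exact Hpunct_ne ha (by linear_combination e)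
    -- (0,1,1): a' ∈ H1 nonzero at 1; a:0,b:2,b':2,c:0,c':2
    · exfalso
      have e := congrFun h 1
      simp only [Pi.add_apply, Pi.sub_apply, Pi.zero_apply,
        ha.1 1 (by decide), hb.1 1 (by decide), hb'.1 1 (by decide),
        hc.1 1 (by decide), hc'.1 1 (by decide)] at e
      exact Hpunct_ne ha' (by linear_combination -e)
    -- (1,0,0): a:1,a':0,b:1,b':1,c:2,c':0 → coord 2: c nonzero
    · exfalso
      have e := congrFun h 2
      simp only [Pi.add_apply, Pi.sub_apply, Pi.zero_apply,
        ha.1 2 (by decide), ha'.1 2 (by decide), hb.1 2 (by decide),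
        hb'.1 2 (by decide), hc'.1 2 (by decide)] at e
      exact Hpunct_ne hc (by linear_combination e)
    -- (1,0,1): a:1,a':0,b:1,b':2,c:0,c':0 → coord 2: b' nonzero
    · exfalso
      have e := congrFun h 2
      simp only [Pi.add_apply, Pi.sub_apply, Pi.zero_apply,
        ha.1 2 (by decide), ha'.1 2 (by decide), hb.1 2 (by decide),
        hc.1 2 (by decide), hc'.1 2 (by decide)] at e
      exact Hpunct_ne hb' (by linear_combination -e)
    -- (1,1,0): a:1,a':1,b:2,b':1,c:2,c':0 → coord 0: c' nonzero
    · exfalso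
      have e := congrFun h 0
      simp only [Pi.add_apply, Pi.sub_apply, Pi.zero_apply,
        ha.1 0 (by decide), ha'.1 0 (by decide), hb.1 0 (by decide),
        hb'.1 0 (by decide), hc.1 0 (by decide)] at e
      exact Hpunct_ne hc' (by linear_combination -e)
    -- (1,1,1)
    · exact ⟨rfl, rfl⟩
end
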